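/- arXiv:1503.01439 — 4 statements merged into one kernel-verified Lean document; each statement's English description precedes it below -/
import Mathlib

section
/- Discrete energy equality for the abstract backward-Euler scheme: suppose sequences w^n, and operators such that for each n, ‖w^{n+1}‖² − (w^{n+1},w^n) + β²‖a^n w^{n+1}‖² − β²(a^{n−1}w^n, a^n w^{n+1}) + k D^{n+1} = k F^{n+1}, where D^{n+1}, F^{n+1} ∈ ℝ. Then for all N ≥ 1: (1/2)‖w^N‖² + (β²/2)‖a^{N−1}w^N‖² + Σ_{n=0}^{N−1} (1/2)(‖w^{n+1}−w^n‖² + β²‖a^n w^{n+1} − a^{n−1}w^n‖²) + k Σ_{n=0}^{N−1} D^{n+1} = (1/2)‖w^0‖² + (β²/2)‖a^{−1}w^0‖² + k Σ_{n=0}^{N−1} F^{n+1}. -/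
open scoped RealInnerProductSpace

/-- Discrete energy equality for the abstract backward-Euler scheme
(Method 1). Here `w n = wⁿ` and `p n = aⁿ⁻¹ wⁿ` (so `p (n+1) = aⁿ w^{n+1}` and
`p 0 = a⁻¹ w⁰ = a⁰ w⁰`). If for each `n`
`‖w^{n+1}‖² - (w^{n+1}, wⁿ) + β²‖aⁿw^{n+1}‖² - β²(aⁿ⁻¹wⁿ, aⁿw^{n+1}) + k D^{n+1} = k F^{n+1}`,
then for all `N ≥ 1`:
`(1/2)‖w^N‖² + (β²/2)‖a^{N-1}w^N‖²
 + ∑_{n=0}^{N-1} (1/2)(‖w^{n+1}-wⁿ‖² + β²‖aⁿw^{n+1} - aⁿ⁻¹wⁿ‖²)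
 + k ∑_{n=0}^{N-1} D^{n+1}
 = (1/2)‖w⁰‖² + (β²/2)‖a⁻¹w⁰‖² + k ∑_{n=0}^{N-1} F^{n+1}`. -/
theorem method1_discrete_energy_equality
    {H : Type*} [NormedAddCommGroup H] [InnerProductSpace ℝ H]
    (w p : ℕ → H) (D F : ℕ → ℝ) (β k : ℝ)
    (heq : ∀ n : ℕ,
      ‖w (n+1)‖^2 - ⟪w (n+1), w n⟫ + β^2 * ‖p (n+1)‖^2 - β^2 * ⟪p n, p (n+1)⟫
        + k * D (n+1) = k * F (n+1)) :
    ∀ N : ℕ, 1 ≤ N →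
      (1/2) * ‖w N‖^2 + (β^2/2) * ‖p N‖^2
        + ∑ n ∈ Finset.range N,
            ((1/2) * (‖w (n+1) - w n‖^2 + β^2 * ‖p (n+1) - p n‖^2))
        + k * ∑ n ∈ Finset.range N, D (n+1)
      = (1/2) * ‖w 0‖^2 + (β^2/2) * ‖p 0‖^2
        + k * ∑ n ∈ Finset.range N, F (n+1) := by
  have key : ∀ N : ℕ,
      (1/2) * ‖w N‖^2 + (β^2/2) * ‖p N‖^2
        + ∑ n ∈ Finset.range N,
            ((1/2) * (‖w (n+1) - w n‖^2 + β^2 * ‖p (n+1) - p n‖^2))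
        + k * ∑ n ∈ Finset.range N, D (n+1)
      = (1/2) * ‖w 0‖^2 + (β^2/2) * ‖p 0‖^2
        + k * ∑ n ∈ Finset.range N, F (n+1) := by
    intro N
    induction N with
    | zero => simp
    | succ N ih =>
      have h := heq N
      have hw : ‖w (N+1) - w N‖^2
          = ‖w (N+1)‖^2 - 2 * ⟪w (N+1), w N⟫ + ‖w N‖^2 :=
        norm_sub_sq_real _ _
      have hp : ‖p (N+1) - p N‖^2
          = ‖p (N+1)‖^2 - 2 * ⟪p (N+1), p N⟫ + ‖p N‖^2 :=
        norm_sub_sq_real _ _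
      have hsym : ⟪p N, p (N+1)⟫ = ⟪p (N+1), p N⟫ := real_inner_comm _ _
      rw [Finset.sum_range_succ, Finset.sum_range_succ, Finset.sum_range_succ]
      rw [hsym] at h
      nlinarith [ih, h, hw, hp]
  intro N _
  exact key N
end

section
/- Unconditional stability of Method 1: with D^{n+1} ≥ 0 and F^{n+1} = (f^{n+1}, w^{n+1}) in the discrete energy equality, if sup_n ‖f^{n+1}‖ < ∞ then the discrete kinetic energies (1/2)‖w^N‖² + (β²/2)‖a^{N−1}w^N‖² satisfy, for all N, (1/2)‖w^N‖² + (β²/2)‖a^{N−1}w^N‖² + k Σ_{n=0}^{N−1}(ν‖∇w^{n+1}‖²)/2 ≤ (1/2)‖w^0‖² + (β²/2)‖a^{−1}w^0‖² + (k N /(2ν)) sup_n ‖f^{n+1}‖²_{−1}, using (f^{n+1},w^{n+1}) ≤ (ν/2)‖∇w^{n+1}‖² + (1/(2ν))‖f^{n+1}‖²_{−1}. -/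
open scoped RealInnerProductSpace

/-- Unconditional stability of Method 1. In the setting of the discrete
energy equality (hypothesis `henergy`, with `w n = wⁿ`, `p n = aⁿ⁻¹wⁿ`), with total
dissipation `D^{n+1} = ∫_Ω[ν+ν_Tⁿ]|∇w^{n+1}|²dx ≥ ν‖∇w^{n+1}‖²` (where
`G (n+1) = ‖∇w^{n+1}‖`), right-hand side `F^{n+1} = (f^{n+1}, w^{n+1})` bounded using
the dual norm estimate `(f^{n+1},w^{n+1}) ≤ (ν/2)‖∇w^{n+1}‖² + (1/(2ν))‖f^{n+1}‖²_{-1}`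
(hypothesis `hF`, where `fdual (n+1) = ‖f^{n+1}‖_{-1}`), and
`sup_n ‖f^{n+1}‖²_{-1} ≤ Mf2 < ∞`, the discrete kinetic energies satisfy, for all `N`,
`(1/2)‖w^N‖² + (β²/2)‖a^{N-1}w^N‖² + k ∑_{n=0}^{N-1} (ν‖∇w^{n+1}‖²)/2
  ≤ (1/2)‖w⁰‖² + (β²/2)‖a⁻¹w⁰‖² + (kN/(2ν)) Mf2`. -/
theorem method1_unconditional_stability
    {H : Type*} [NormedAddCommGroup H] [InnerProductSpace ℝ H]
    (w p : ℕ → H) (D F G fdual : ℕ → ℝ) (β k ν Mf2 : ℝ)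
    (hk : 0 < k) (hν : 0 < ν)
    (henergy : ∀ N : ℕ, 1 ≤ N →
      (1/2) * ‖w N‖^2 + (β^2/2) * ‖p N‖^2
        + ∑ n ∈ Finset.range N,
            ((1/2) * (‖w (n+1) - w n‖^2 + β^2 * ‖p (n+1) - p n‖^2))
        + k * ∑ n ∈ Finset.range N, D (n+1)
      = (1/2) * ‖w 0‖^2 + (β^2/2) * ‖p 0‖^2
        + k * ∑ n ∈ Finset.range N, F (n+1))
    (hD : ∀ n : ℕ, ν * (G (n+1))^2 ≤ D (n+1))
    (hF : ∀ n : ℕ, F (n+1) ≤ (ν/2) * (G (n+1))^2 + (1/(2*ν)) * (fdual (n+1))^2)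
    (hMf : ∀ n : ℕ, (fdual (n+1))^2 ≤ Mf2) :
    ∀ N : ℕ, 1 ≤ N →
      (1/2) * ‖w N‖^2 + (β^2/2) * ‖p N‖^2
        + k * ∑ n ∈ Finset.range N, (ν * (G (n+1))^2) / 2
      ≤ (1/2) * ‖w 0‖^2 + (β^2/2) * ‖p 0‖^2 + (k * N / (2*ν)) * Mf2 := by
  intro N hN
  have he := henergy N hN
  have hS : 0 ≤ ∑ n ∈ Finset.range N,
      ((1/2) * (‖w (n+1) - w n‖^2 + β^2 * ‖p (n+1) - p n‖^2)) := by
    apply Finset.sum_nonneg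
    intro n _
    positivity
  have hDsum : ∑ n ∈ Finset.range N, (ν * (G (n+1))^2) ≤
      ∑ n ∈ Finset.range N, D (n+1) :=
    Finset.sum_le_sum fun n _ => hD n
  have hFsum : ∑ n ∈ Finset.range N, F (n+1) ≤
      ∑ n ∈ Finset.range N, ((ν/2) * (G (n+1))^2 + (1/(2*ν)) * Mf2) := by
    apply Finset.sum_le_sum
    intro n _
    calc F (n+1) ≤ (ν/2) * (G (n+1))^2 + (1/(2*ν)) * (fdual (n+1))^2 := hF n
      _ ≤ (ν/2) * (G (n+1))^2 + (1/(2*ν)) * Mf2 := by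
          have := hMf n
          have h2ν : 0 < 2*ν := by linarith
          nlinarith [this, (one_div_pos.mpr h2ν)]
  have hsplit : ∑ n ∈ Finset.range N, ((ν/2) * (G (n+1))^2 + (1/(2*ν)) * Mf2)
      = (∑ n ∈ Finset.range N, (ν/2) * (G (n+1))^2) + N * ((1/(2*ν)) * Mf2) := by
    rw [Finset.sum_add_distrib, Finset.sum_const, Finset.card_range, nsmul_eq_mul]
  have key : (1/2) * ‖w N‖^2 + (β^2/2) * ‖p N‖^2
      + k * ∑ n ∈ Finset.range N, (ν * (G (n+1))^2)
      ≤ (1/2) * ‖w 0‖^2 + (β^2/2) * ‖p 0‖^2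
      + k * ((∑ n ∈ Finset.range N, (ν/2) * (G (n+1))^2) + N * ((1/(2*ν)) * Mf2)) := by
    rw [← hsplit]
    nlinarith [mul_le_mul_of_nonneg_left hDsum hk.le,
      mul_le_mul_of_nonneg_left hFsum hk.le]
  have hhalf : ∑ n ∈ Finset.range N, (ν * (G (n+1))^2) / 2
      = ∑ n ∈ Finset.range N, (ν/2) * (G (n+1))^2 := by
    apply Finset.sum_congr rfl; intro n _; ring
  rw [hhalf]
  have hMf2eq : k * N * ((1/(2*ν)) * Mf2) = (k * N / (2*ν)) * Mf2 := by
    field_simp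
  have h2 : ∑ n ∈ Finset.range N, (ν * (G (n+1))^2)
      = 2 * ∑ n ∈ Finset.range N, (ν/2) * (G (n+1))^2 := by
    rw [Finset.mul_sum]
    apply Finset.sum_congr rfl; intro n _; ring
  have hexp := mul_add k (∑ n ∈ Finset.range N, (ν/2) * (G (n+1))^2)
    ((N : ℝ) * ((1/(2*ν)) * Mf2))
  nlinarith [key, mul_le_mul_of_nonneg_left
    (Finset.sum_nonneg fun n _ => by positivity :
      (0:ℝ) ≤ ∑ n ∈ Finset.range N, (ν/2) * (G (n+1))^2) hk.le]
end

section
/- Step 2 energy identity for the modular algorithm: if [1 + β²(a^n)²]w^{n+1} + ∇q^{n+1} = w_temp^{n+1} + β² a^n a^{n−1} w^n with ∇·w^{n+1} = 0 and w^{n+1} = 0 on ∂Ω, then (1/2)‖w^{n+1}‖² + (β²/2)‖a^n w^{n+1}‖² − (β²/2)‖a^{n−1}w^n‖² + (1/2)‖w_temp^{n+1} − w^{n+1}‖² + (β²/2)‖a^n w^{n+1} − a^{n−1}w^n‖² = (1/2)‖w_temp^{n+1}‖². -/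
open scoped RealInnerProductSpace

/-- Step 2 energy identity for the modular algorithm. Testing
`[1 + β²(aⁿ)²]w^{n+1} + ∇q^{n+1} = w_temp^{n+1} + β² aⁿ aⁿ⁻¹ wⁿ` with the
divergence-free `w^{n+1}` (which vanishes on `∂Ω`, so `(∇q^{n+1}, w^{n+1}) = 0`)
gives `‖w^{n+1}‖² + β²‖aⁿw^{n+1}‖² = (w_temp^{n+1}, w^{n+1}) + β²(aⁿ⁻¹wⁿ, aⁿw^{n+1})`,
encoded as hypothesis `htest` with `x = aⁿ w^{n+1}` and `y = aⁿ⁻¹ wⁿ`. Then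
`(1/2)‖w^{n+1}‖² + (β²/2)‖aⁿw^{n+1}‖² - (β²/2)‖aⁿ⁻¹wⁿ‖²
 + (1/2)‖w_temp^{n+1} - w^{n+1}‖² + (β²/2)‖aⁿw^{n+1} - aⁿ⁻¹wⁿ‖² = (1/2)‖w_temp^{n+1}‖²`. -/
theorem modular_step2_energy_identity
    {H : Type*} [NormedAddCommGroup H] [InnerProductSpace ℝ H]
    (wnew wtemp x y : H) (β : ℝ)
    (htest : ‖wnew‖^2 + β^2 * ‖x‖^2 = ⟪wtemp, wnew⟫ + β^2 * ⟪y, x⟫) :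
    (1/2) * ‖wnew‖^2 + (β^2/2) * ‖x‖^2 - (β^2/2) * ‖y‖^2
      + (1/2) * ‖wtemp - wnew‖^2 + (β^2/2) * ‖x - y‖^2
      = (1/2) * ‖wtemp‖^2 := by
  have h1 : ‖wtemp - wnew‖^2 = ‖wtemp‖^2 - 2*⟪wtemp, wnew⟫ + ‖wnew‖^2 := by
    exact norm_sub_sq_real _ _
  have h2 : ‖x - y‖^2 = ‖x‖^2 - 2*⟪x, y⟫ + ‖y‖^2 := by
    exact norm_sub_sq_real _ _
  have h3 : ⟪y, x⟫ = ⟪x, y⟫ := real_inner_comm x y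
  rw [h3] at htest
  nlinarith [htest, h1, h2]
end

section
/- Unconditional stability of Method 3 (discrete energy equality): if for each n ≥ 3 the scheme satisfies, after testing with w^{n+1}, ((3w^{n+1}−4w^n+w^{n−1})/(2k), w^{n+1}) + β²((3a^{*n+1}w^{n+1} − 4a^{*n}w^n + a^{*n−1}w^{n−1})/(2k), a^{*n+1}w^{n+1}) + D^{n+1} = (f^{n+1}, w^{n+1}), with D^{n+1} = ∫_Ω[ν+ν_T^{*n+1}]|∇w^{n+1}|² dx, then for all N ≥ 3: (1/4)(‖w^N‖² + ‖2w^N − w^{N−1}‖²) + (β²/4)(‖a^{*N}w^N‖² + ‖2a^{*N}w^N − a^{*N−1}w^{N−1}‖²) + Σ_{n=3}^{N−1}[(1/4)‖w^{n+1}−2w^n+w^{n−1}‖² + (β²/4)‖a^{*n+1}w^{n+1}−2a^{*n}w^n+a^{*n−1}w^{n−1}‖² + k D^{n+1}] = (1/4)(‖w³‖² + ‖2w³−w²‖²) + (β²/4)(‖a^{*3}w³‖² + ‖2a^{*3}w³ − a^{*2}w²‖²) + k Σ_{n=3}^{N−1}(f^{n+1}, w^{n+1}). -/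
open scoped RealInnerProductSpace

private lemma bdf2_identity {H : Type*} [NormedAddCommGroup H] [InnerProductSpace ℝ H]
    (a b c : H) :
    (‖a‖^2 + ‖(2:ℝ) • a - b‖^2) - (‖b‖^2 + ‖(2:ℝ) • b - c‖^2)
      + ‖a - (2:ℝ) • b + c‖^2
    = 2 * ⟪(3:ℝ) • a - (4:ℝ) • b + c, a⟫ := by
  simp only [← real_inner_self_eq_norm_sq, inner_sub_left, inner_sub_right,
    inner_add_left, inner_add_right, inner_smul_left, inner_smul_right,
    real_inner_comm b a, real_inner_comm c a, real_inner_comm c b,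
    RCLike.ofReal_real_eq_id, id_eq, starRingEnd_apply, star_trivial]
  ring

/-- Unconditional stability of Method 3 (discrete energy equality for the
BDF2/AB2 scheme). Here `w n = wⁿ` and `p n = a^{*n} wⁿ` (pointwise multiplication by the
extrapolated scalar function `a^{*n} = 2aⁿ⁻¹ - aⁿ⁻²`). If for each `n ≥ 3` the scheme,
tested with `w^{n+1}`, satisfies
`((3w^{n+1}-4wⁿ+wⁿ⁻¹)/(2k), w^{n+1})
 + β²((3a^{*n+1}w^{n+1} - 4a^{*n}wⁿ + a^{*n-1}wⁿ⁻¹)/(2k), a^{*n+1}w^{n+1})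
 + D^{n+1} = (f^{n+1}, w^{n+1}) =: F^{n+1}`,
then for all `N ≥ 3` the claimed discrete energy equality holds. -/
theorem method3_discrete_energy_equality
    {H : Type*} [NormedAddCommGroup H] [InnerProductSpace ℝ H]
    (w p : ℕ → H) (D F : ℕ → ℝ) (β k : ℝ) (hk : 0 < k)
    (heq : ∀ n : ℕ, 3 ≤ n →
      ⟪(3:ℝ) • w (n+1) - (4:ℝ) • w n + w (n-1), w (n+1)⟫ / (2*k)
        + β^2 * (⟪(3:ℝ) • p (n+1) - (4:ℝ) • p n + p (n-1), p (n+1)⟫ / (2*k))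
        + D (n+1) = F (n+1)) :
    ∀ N : ℕ, 3 ≤ N →
      (1/4) * (‖w N‖^2 + ‖(2:ℝ) • w N - w (N-1)‖^2)
        + (β^2/4) * (‖p N‖^2 + ‖(2:ℝ) • p N - p (N-1)‖^2)
        + ∑ n ∈ Finset.Ico 3 N,
            ((1/4) * ‖w (n+1) - (2:ℝ) • w n + w (n-1)‖^2
              + (β^2/4) * ‖p (n+1) - (2:ℝ) • p n + p (n-1)‖^2
              + k * D (n+1))
      = (1/4) * (‖w 3‖^2 + ‖(2:ℝ) • w 3 - w 2‖^2)
        + (β^2/4) * (‖p 3‖^2 + ‖(2:ℝ) • p 3 - p 2‖^2)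
        + k * ∑ n ∈ Finset.Ico 3 N, F (n+1) := by
  intro N hN
  induction N, hN using Nat.le_induction with
  | base => simp
  | succ N hN ih =>
      have h := heq N hN
      have hk' : k ≠ 0 := hk.ne'
      have h2 : ⟪(3:ℝ) • w (N+1) - (4:ℝ) • w N + w (N-1), w (N+1)⟫
          + β^2 * ⟪(3:ℝ) • p (N+1) - (4:ℝ) • p N + p (N-1), p (N+1)⟫
          + 2*k*D (N+1) = 2*k*F (N+1) := by
        field_simp at h
        linarith
      have bw := bdf2_identity (w (N+1)) (w N) (w (N-1))
      have bp := bdf2_identity (p (N+1)) (p N) (p (N-1))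
      rw [Finset.sum_Ico_succ_top hN, Finset.sum_Ico_succ_top hN]
      have hsub : N + 1 - 1 = N := rfl
      rw [hsub]
      linear_combination ih + (1/4)*bw + (β^2/4)*bp + (1/2)*h2
end
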